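/- Let $R$ be a Noetherian ring of characteristic $p$, $\sqrt{(0)}$ its nilradical, $R_{\mathrm{red}}=R/\sqrt{(0)}$, and $\mathfrak a, J$ ideals with $\mathfrak a\subseteq\sqrt J$, with images $\bar{\mathfrak a},\bar J$ in $R_{\mathrm{red}}$. Let $\mu$ be the least number of generators of $\mathfrak a$ and $q'=p^{e'}$ a power with $\sqrt{(0)}^{[q']}=0$. Then for all $q=p^e$: $\nu_{\bar{\mathfrak a}}^{\bar J}(qq')/(qq') \le \nu_{\mathfrak a}^J(qq')/(qq') \le \nu_{\bar{\mathfrak a}}^{\bar J}(q)/q + \mu/q$. In particular, if the limit of $\nu_{\bar{\mathfrak a}}^{\bar J}(q)/q$ exists, so does that of $\nu_{\mathfrak a}^J(q)/q$, and they are equal. -/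

import Mathlib

open Filter

noncomputable section

/-- The `q`-th Frobenius power `J^{[q]}` of an ideal: the ideal generated by
`q`-th powers of elements of `J`. -/
def Ideal.frobPow {R : Type*} [CommSemiring R] (J : Ideal R) (q : ℕ) : Ideal R :=
  Ideal.span ((fun x => x ^ q) '' (J : Set R))

/-- `ν_𝔞^J(q) = max {r | 𝔞^r ⊄ J^{[q]}}` (with value `0` if `𝔞 ⊆ J^{[q]}`). -/
def Ideal.fnu {R : Type*} [CommSemiring R] (𝔞 J : Ideal R) (q : ℕ) : ℕ :=
  sSup {r : ℕ | ¬ 𝔞 ^ r ≤ J.frobPow q}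

/-- `c₊^J(𝔞) = limsup_{q = pᵉ → ∞} ν_𝔞^J(q)/q`. -/
def Ideal.cplus {R : Type*} [CommSemiring R] (𝔞 J : Ideal R) (p : ℕ) : ℝ :=
  Filter.limsup (fun e : ℕ => (𝔞.fnu J (p ^ e) : ℝ) / (p ^ e : ℕ)) Filter.atTop

/-- `c₋^J(𝔞) = liminf_{q = pᵉ → ∞} ν_𝔞^J(q)/q`. -/
def Ideal.cminus {R : Type*} [CommSemiring R] (𝔞 J : Ideal R) (p : ℕ) : ℝ :=
  Filter.liminf (fun e : ℕ => (𝔞.fnu J (p ^ e) : ℝ) / (p ^ e : ℕ)) Filter.atTop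

/-- `x ∈ R°`, i.e. `x` lies outside every minimal prime of `R`. -/
def Ideal.memRcirc {R : Type*} [CommSemiring R] (x : R) : Prop :=
  ∀ P ∈ minimalPrimes R, x ∉ P

/-- The length of an `R`-module `M`, computed as the Krull dimension of its
lattice of submodules (converted to a natural number; `0` by convention in the
degenerate infinite cases). -/
def moduleLength (R M : Type*) [Ring R] [AddCommGroup M] [Module R M] : ℕ :=
  ((Order.krullDim (Submodule R M)).unbotD 0).toNat

/-- The Hilbert–Samuel multiplicity of an ideal `I` in a `d`-dimensional ring:
`e(I) = lim_n d! · ℓ(R/Iⁿ)/n^d` (expressed as a `limsup` so as to be total). -/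
def Ideal.eMult {R : Type*} [CommRing R] (d : ℕ) (I : Ideal R) : ℝ :=
  Filter.limsup
    (fun n : ℕ => (d.factorial : ℝ) * (moduleLength R (R ⧸ I ^ n) : ℝ) / (n : ℝ) ^ d)
    Filter.atTop

end


/-!
Reducing modulo the nilradical `N` can only lower `ν`, because `𝔞 ^ r ≤ J^{[Q]}` survives
taking images. Conversely, if `m = ν_{𝔞̄}^{J̄}(q)` then `𝔞 ^ (m + 1) ≤ J^{[q]} ⊔ N`; the Frobenius
power `[q']` kills `N`, so `(𝔞 ^ (m + 1))^{[q']} ≤ J^{[qq']}`. A pigeonhole count on monomials in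
`μ` generators gives `𝔞 ^ (q' (m + μ) + 1) ≤ (𝔞 ^ (m + 1))^{[q']}`, hence
`ν_𝔞^J(qq') ≤ q' (ν_{𝔞̄}^{J̄}(q) + μ)`. The limit statement follows by squeezing.
-/

open Finset

theorem Finset.lt_sum_div_of_mul_add_card_lt {ι : Type*} (s : Finset ι) (c : ι → ℕ) {q m : ℕ}
    (hq : 0 < q) (h : q * (m + #s) < ∑ i ∈ s, c i) : m < ∑ i ∈ s, c i / q := by
  have hround : ∑ i ∈ s, c i + #s ≤ q * (∑ i ∈ s, c i / q + #s) :=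
    calc ∑ i ∈ s, c i + #s = ∑ i ∈ s, (c i + 1) := by rw [sum_add_distrib, card_eq_sum_ones]
      _ ≤ ∑ i ∈ s, q * (c i / q + 1) := sum_le_sum fun i _ => Nat.lt_mul_div_succ (c i) hq
      _ = q * (∑ i ∈ s, c i / q + #s) := by rw [← mul_sum, sum_add_distrib, card_eq_sum_ones]
  have := Nat.lt_of_mul_lt_mul_left (a := q) ((h.trans_le (Nat.le_add_right _ _)).trans_le hround)
  omega

namespace Ideal

section CommSemiring

variable {R : Type*} [CommSemiring R]

theorem frobPow_mono {I J : Ideal R} (h : I ≤ J) (q : ℕ) : I.frobPow q ≤ J.frobPow q :=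
  span_mono (Set.image_mono h)

theorem pow_mem_frobPow {I : Ideal R} {x : R} (hx : x ∈ I) (q : ℕ) : x ^ q ∈ I.frobPow q :=
  subset_span ⟨x, hx, rfl⟩

theorem map_frobPow_le {S : Type*} [CommSemiring S] (f : R →+* S) (I : Ideal R) (q : ℕ) :
    (I.frobPow q).map f ≤ (I.map f).frobPow q := by
  rw [frobPow, map_span]
  refine span_le.2 ?_
  rintro _ ⟨_, ⟨x, hx, rfl⟩, rfl⟩
  exact (map_pow f x q).symm ▸ pow_mem_frobPow (mem_map_of_mem f hx) q

theorem le_radical_frobPow {I J : Ideal R} (h : I ≤ J.radical) (q : ℕ) :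
    I ≤ (J.frobPow q).radical := by
  intro x hx
  obtain ⟨k, hk⟩ := h hx
  exact ⟨k * q, by simpa only [pow_mul] using pow_mem_frobPow hk q⟩

theorem exists_pow_le_frobPow {I J : Ideal R} (hI : I.FG) (h : I ≤ J.radical) (q : ℕ) :
    ∃ n, I ^ n ≤ J.frobPow q :=
  exists_pow_le_of_le_radical_of_fg (le_radical_frobPow h q) hI

theorem prod_pow_mem_frobPow_span_pow (s : Finset R) (c : R → ℕ) {q m : ℕ} (hq : 0 < q)
    (h : q * (m + #s) < ∑ a ∈ s, c a) :
    ∏ a ∈ s, a ^ c a ∈ (span (s : Set R) ^ (m + 1)).frobPow q := by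
  have hsplit : ∏ a ∈ s, a ^ c a = (∏ a ∈ s, a ^ (c a / q)) ^ q * ∏ a ∈ s, a ^ (c a % q) := by
    rw [← prod_pow, ← prod_mul_distrib]
    refine prod_congr rfl fun a _ => ?_
    rw [← pow_mul, ← pow_add, mul_comm, Nat.div_add_mod]
  rw [hsplit]
  refine mul_mem_right _ _ (pow_mem_frobPow ?_ q)
  refine pow_le_pow_right (s.lt_sum_div_of_mul_add_card_lt c hq h) ?_
  rw [← prod_pow_eq_pow_sum]
  exact prod_mem_prod fun a ha => pow_mem_pow (subset_span ha) _

theorem span_pow_le_frobPow_span_pow (s : Finset R) {q : ℕ} (hq : 0 < q) (m : ℕ) :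
    span (s : Set R) ^ (q * (m + #s) + 1) ≤ (span (s : Set R) ^ (m + 1)).frobPow q := by
  classical
  rw [← submodule_span_eq, Submodule.span_pow, submodule_span_eq, span_le]
  intro x hx
  obtain ⟨f, rfl⟩ := Set.mem_pow.1 hx
  set l := List.ofFn fun i => (f i : R)
  have hl : ∀ a ∈ l, a ∈ s := by simp [l]
  rw [prod_list_count_of_subset l s fun a ha => hl a (List.mem_toFinset.1 ha)]
  refine prod_pow_mem_frobPow_span_pow s _ hq ?_
  have := Multiset.sum_count_eq_card (m := (l : Multiset R)) hl
  simp only [Multiset.coe_count, Multiset.coe_card, l, List.length_ofFn] at this ⊢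
  omega

section ExpChar

variable (p : ℕ) [ExpChar R p]

theorem frobPow_expChar_pow_eq_map (I : Ideal R) (n : ℕ) :
    I.frobPow (p ^ n) = I.map (iterateFrobenius R p n) :=
  rfl

theorem frobPow_sup (I K : Ideal R) (n : ℕ) :
    (I ⊔ K).frobPow (p ^ n) = I.frobPow (p ^ n) ⊔ K.frobPow (p ^ n) := by
  simp only [frobPow_expChar_pow_eq_map, map_sup]

theorem frobPow_frobPow (I : Ideal R) (m n : ℕ) :
    (I.frobPow (p ^ m)).frobPow (p ^ n) = I.frobPow (p ^ m * p ^ n) := by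
  rw [← pow_add, frobPow_expChar_pow_eq_map, frobPow_expChar_pow_eq_map,
    frobPow_expChar_pow_eq_map, map_map]
  congr 1
  ext x
  simp [iterateFrobenius_def, pow_add, pow_mul]

theorem map_frobPow {S : Type*} [CommSemiring S] [ExpChar S p] (f : R →+* S) (I : Ideal R)
    (n : ℕ) : (I.frobPow (p ^ n)).map f = (I.map f).frobPow (p ^ n) := by
  rw [frobPow_expChar_pow_eq_map, frobPow_expChar_pow_eq_map, map_map, map_map]
  congr 1
  ext x
  simp [iterateFrobenius_def]

end ExpChar

theorem fnu_le_of_pow_le {𝔞 J : Ideal R} {q B : ℕ} (h : 𝔞 ^ (B + 1) ≤ J.frobPow q) :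
    𝔞.fnu J q ≤ B :=
  csSup_le' fun r hr => by
    by_contra! hc
    exact hr ((pow_le_pow_right hc).trans h)

theorem pow_fnu_succ_le {𝔞 J : Ideal R} {q n : ℕ} (h : 𝔞 ^ n ≤ J.frobPow q) :
    𝔞 ^ (𝔞.fnu J q + 1) ≤ J.frobPow q := by
  have hbdd : BddAbove {r | ¬ 𝔞 ^ r ≤ J.frobPow q} :=
    ⟨n, fun r hr => by
      by_contra! hc
      exact hr ((pow_le_pow_right hc.le).trans h)⟩
  by_contra hc
  exact (Nat.lt_succ_self _).not_ge (le_csSup hbdd hc)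

theorem fnu_map_le {S : Type*} [CommSemiring S] (f : R →+* S) {𝔞 J : Ideal R} {q n : ℕ}
    (h : 𝔞 ^ n ≤ J.frobPow q) : (𝔞.map f).fnu (J.map f) q ≤ 𝔞.fnu J q := by
  apply fnu_le_of_pow_le
  rw [← Ideal.map_pow]
  exact (map_mono (pow_fnu_succ_le h)).trans (map_frobPow_le f J q)

end CommSemiring

section CommRing

variable {R S : Type*} [CommRing R] [CommRing S] (p : ℕ) [ExpChar R p] [ExpChar S p]

theorem fnu_le_mul_fnu_map_add_card {f : R →+* S} (hf : Function.Surjective f) {e' : ℕ}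
    (hker : (RingHom.ker f).frobPow (p ^ e') = ⊥) {s : Finset R} {𝔞 : Ideal R}
    (hs : span (s : Set R) = 𝔞) (J : Ideal R) {e n : ℕ}
    (hfin : 𝔞.map f ^ n ≤ (J.map f).frobPow (p ^ e)) :
    𝔞.fnu J (p ^ e * p ^ e') ≤ p ^ e' * ((𝔞.map f).fnu (J.map f) (p ^ e) + #s) := by
  set m := (𝔞.map f).fnu (J.map f) (p ^ e)
  have hlift : 𝔞 ^ (m + 1) ≤ J.frobPow (p ^ e) ⊔ RingHom.ker f := by
    rw [← comap_map_of_surjective' f hf, ← map_le_iff_le_comap, Ideal.map_pow, map_frobPow]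
    exact pow_fnu_succ_le hfin
  apply fnu_le_of_pow_le
  calc 𝔞 ^ (p ^ e' * (m + #s) + 1) ≤ (𝔞 ^ (m + 1)).frobPow (p ^ e') :=
        hs ▸ span_pow_le_frobPow_span_pow s (expChar_pow_pos R p e') m
    _ ≤ (J.frobPow (p ^ e) ⊔ RingHom.ker f).frobPow (p ^ e') := frobPow_mono hlift _
    _ = J.frobPow (p ^ e * p ^ e') := by rw [frobPow_sup, hker, sup_bot_eq, frobPow_frobPow]

end CommRing

end Ideal

theorem charP_quotient_nilradical {R : Type*} [CommRing R] (p : ℕ) [hp : Fact p.Prime]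
    [CharP R p] : CharP (R ⧸ nilradical R) p :=
  CharP.quotient' p _ fun x ⟨k, hk⟩ => (CharP.cast_eq_zero_iff R p x).2 <|
    hp.out.dvd_of_dvd_pow ((CharP.cast_eq_zero_iff R p _).1 (by push_cast; exact hk))

theorem Nat.cast_div_mul_le_div_add_div {a b c q q' : ℕ} (hq : 0 < q) (hq' : 0 < q')
    (h : a ≤ q' * (b + c)) : (a : ℝ) / (q * q' : ℕ) ≤ b / q + c / q := by
  rw [← add_div, div_le_div_iff₀ (by positivity) (by positivity)]
  have : (a : ℝ) ≤ q' * (b + c) := by exact_mod_cast h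
  push_cast
  nlinarith [(Nat.cast_pos.2 hq : (0 : ℝ) < q)]

theorem tendsto_of_le_shift_of_shift_le_add {u v c : ℕ → ℝ} {L : ℝ} (k : ℕ)
    (hv : Tendsto v atTop (nhds L)) (hc : Tendsto c atTop (nhds 0))
    (hlow : ∀ e, v (e + k) ≤ u (e + k)) (hup : ∀ e, u (e + k) ≤ v e + c e) :
    Tendsto u atTop (nhds L) := by
  rw [← tendsto_add_atTop_iff_nat k]
  refine tendsto_of_tendsto_of_tendsto_of_le_of_le ((tendsto_add_atTop_iff_nat k).2 hv) ?_ hlow hup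
  simpa using hv.add hc

open Filter in
theorem nu_reduction_general {R : Type*} [CommRing R]
    (p : ℕ) [Fact p.Prime] [CharP R p]
    (𝔞 J : Ideal R) (hrad : 𝔞 ≤ J.radical)
    (𝔞r Jr : Ideal (R ⧸ nilradical R))
    (h𝔞r : 𝔞r = 𝔞.map (Ideal.Quotient.mk (nilradical R)))
    (hJr : Jr = J.map (Ideal.Quotient.mk (nilradical R)))
    (μ : ℕ)
    (hμgen : ∃ s : Finset R, s.card = μ ∧ Ideal.span (s : Set R) = 𝔞)
    (e' : ℕ) (he' : (nilradical R).frobPow (p ^ e') = ⊥) :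
    (∀ e : ℕ,
      (𝔞r.fnu Jr (p ^ e * p ^ e') : ℝ) / (p ^ e * p ^ e' : ℕ) ≤
        (𝔞.fnu J (p ^ e * p ^ e') : ℝ) / (p ^ e * p ^ e' : ℕ) ∧
      (𝔞.fnu J (p ^ e * p ^ e') : ℝ) / (p ^ e * p ^ e' : ℕ) ≤
        (𝔞r.fnu Jr (p ^ e) : ℝ) / (p ^ e : ℕ) + (μ : ℝ) / (p ^ e : ℕ)) ∧
    ∀ L : ℝ,
      Tendsto (fun e : ℕ => (𝔞r.fnu Jr (p ^ e) : ℝ) / (p ^ e : ℕ)) atTop (nhds L) →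
      Tendsto (fun e : ℕ => (𝔞.fnu J (p ^ e) : ℝ) / (p ^ e : ℕ)) atTop (nhds L) := by
  obtain ⟨s, rfl, hs⟩ := hμgen
  subst h𝔞r hJr
  have := charP_quotient_nilradical (R := R) p
  have hp := (Fact.out : p.Prime)
  set mk := Ideal.Quotient.mk (nilradical R)
  have hfg : 𝔞.FG := ⟨s, hs⟩
  have hbounds : ∀ e : ℕ,
      ((𝔞.map mk).fnu (J.map mk) (p ^ e * p ^ e') : ℝ) / (p ^ e * p ^ e' : ℕ) ≤
        (𝔞.fnu J (p ^ e * p ^ e') : ℝ) / (p ^ e * p ^ e' : ℕ) ∧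
      (𝔞.fnu J (p ^ e * p ^ e') : ℝ) / (p ^ e * p ^ e' : ℕ) ≤
        ((𝔞.map mk).fnu (J.map mk) (p ^ e) : ℝ) / (p ^ e : ℕ) + (#s : ℝ) / (p ^ e : ℕ) := by
    intro e
    obtain ⟨n, hn⟩ := Ideal.exists_pow_le_frobPow hfg hrad (p ^ e * p ^ e')
    obtain ⟨n', hn'⟩ := Ideal.exists_pow_le_frobPow (hfg.map mk)
      ((Ideal.map_mono hrad).trans (Ideal.map_radical_le mk)) (p ^ e)
    refine ⟨div_le_div_of_nonneg_right (by exact_mod_cast Ideal.fnu_map_le mk hn) (by positivity),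
      Nat.cast_div_mul_le_div_add_div (pow_pos hp.pos e) (pow_pos hp.pos e') ?_⟩
    exact Ideal.fnu_le_mul_fnu_map_add_card p Ideal.Quotient.mk_surjective
      (by rwa [Ideal.mk_ker]) hs J hn'
  refine ⟨hbounds, fun L hL => tendsto_of_le_shift_of_shift_le_add e' hL ?_
    (fun e => by simpa [pow_add] using (hbounds e).1)
    (fun e => by simpa [pow_add] using (hbounds e).2)⟩
  simpa using (tendsto_pow_atTop_atTop_of_one_lt
    (by exact_mod_cast hp.one_lt : (1 : ℝ) < p)).const_div_atTop (#s : ℝ)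

open Filter in
/-- Remark 1.5: comparison of `ν` for `R` and its reduction
`R_red = R/√(0)`, and the consequence for the existence of the `F`-threshold. -/
theorem nu_reduction {R : Type*} [CommRing R] [IsNoetherianRing R]
    (p : ℕ) [Fact p.Prime] [CharP R p]
    (𝔞 J : Ideal R) (hrad : 𝔞 ≤ J.radical)
    (𝔞r Jr : Ideal (R ⧸ nilradical R))
    (h𝔞r : 𝔞r = 𝔞.map (Ideal.Quotient.mk (nilradical R)))
    (hJr : Jr = J.map (Ideal.Quotient.mk (nilradical R)))
    (μ : ℕ)
    (hμgen : ∃ s : Finset R, s.card = μ ∧ Ideal.span (s : Set R) = 𝔞)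
    (hμmin : ∀ s : Finset R, Ideal.span (s : Set R) = 𝔞 → μ ≤ s.card)
    (e' : ℕ) (he' : (nilradical R).frobPow (p ^ e') = ⊥) :
    (∀ e : ℕ,
      (𝔞r.fnu Jr (p ^ e * p ^ e') : ℝ) / (p ^ e * p ^ e' : ℕ) ≤
        (𝔞.fnu J (p ^ e * p ^ e') : ℝ) / (p ^ e * p ^ e' : ℕ) ∧
      (𝔞.fnu J (p ^ e * p ^ e') : ℝ) / (p ^ e * p ^ e' : ℕ) ≤
        (𝔞r.fnu Jr (p ^ e) : ℝ) / (p ^ e : ℕ) + (μ : ℝ) / (p ^ e : ℕ)) ∧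
    ∀ L : ℝ,
      Tendsto (fun e : ℕ => (𝔞r.fnu Jr (p ^ e) : ℝ) / (p ^ e : ℕ)) atTop (nhds L) →
      Tendsto (fun e : ℕ => (𝔞.fnu J (p ^ e) : ℝ) / (p ^ e : ℕ)) atTop (nhds L) :=
  nu_reduction_general p 𝔞 J hrad 𝔞r Jr h𝔞r hJr μ hμgen e' he'
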